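/- If n ≡ 2 (mod 4), then the minimal sensitivity of the simplified weighted sum function on n variables is 0. -/
import Mathlib


open Finset

/-- the weighted sum `s(X) = (∑ k, k·x_k) mod n`, as an element of `ZMod n`. -/
def wsS {n : ℕ} [NeZero n] (X : ZMod n → Bool) : ZMod n :=
  ∑ i : ZMod n, if X i then i else 0

/-- the simplified weighted sum function `f(X) = x_{s(X)}`. -/
def wsF {n : ℕ} [NeZero n] (X : ZMod n → Bool) : Bool := X (wsS X)

/-- the sensitivity `Sen(f, X)`: the number of coordinates whose flip changes `f`. -/
def wsSens {n : ℕ} [NeZero n] (X : ZMod n → Bool) : ℕ :=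
  (Finset.univ.filter fun i : ZMod n =>
    wsF (Function.update X i (!X i)) ≠ wsF X).card

lemma sum_zmod (n : ℕ) [NeZero n] :
    (∑ i : ZMod n, i) = ((n * (n - 1) / 2 : ℕ) : ZMod n) := by
  rw [← Finset.sum_range_id, Nat.cast_sum]
  exact (Finset.sum_bij' (fun (i : ZMod n) _ => i.val) (fun (i : ℕ) _ => (i : ZMod n))
    (fun a _ => Finset.mem_range.2 (ZMod.val_lt a))
    (fun a ha => Finset.mem_univ _)
    (fun a _ => ZMod.natCast_rightInverse a)
    (fun a ha => ZMod.val_cast_of_lt (Finset.mem_range.1 ha))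
    (fun a _ => (ZMod.natCast_rightInverse a).symm))

theorem stmt_18 (n : ℕ) [NeZero n] (hn : n % 4 = 2) :
    ∃ X : ZMod n → Bool, wsSens X = 0 := by
  obtain ⟨k, hk⟩ : ∃ k, n = 4 * k + 2 := ⟨n / 4, by omega⟩
  set X : ZMod n → Bool := fun _ => true with hX
  refine ⟨X, ?_⟩
  have hS : (∑ i : ZMod n, i) = ((n * (n - 1) / 2 : ℕ) : ZMod n) := sum_zmod n
  have hSne : ∀ i : ZMod n, (∑ j : ZMod n, j) ≠ i + i := by
    intro i h
    have h2 : (2 : ℕ) ∣ n := by omega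
    have := congrArg (ZMod.castHom h2 (ZMod 2)) h
    rw [hS, map_add, map_natCast] at this
    have hodd : n * (n - 1) / 2 = (2 * k + 1) * (4 * k + 1) := by
      rw [hk, show 4 * k + 2 - 1 = 4 * k + 1 by omega,
        show (4 * k + 2) * (4 * k + 1) = 2 * ((2 * k + 1) * (4 * k + 1)) by ring]
      exact Nat.mul_div_cancel_left _ (by norm_num)
    have : ((2 * k + 1) * (4 * k + 1) : ZMod 2) = 0 := by
      rw [hodd] at this
      push_cast at this ⊢
      rw [this]
      ring_nf
      rw [show (2 : ZMod 2) = 0 by decide]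
      ring
    have h1 : ((2 * k + 1) * (4 * k + 1) : ZMod 2) = 1 := by
      push_cast
      rw [show (2 : ZMod 2) = 0 by decide, show (4 : ZMod 2) = 0 by decide]
      ring
    rw [h1] at this
    exact one_ne_zero this
  have key : ∀ i : ZMod n, wsF (Function.update X i (!X i)) = wsF X := by
    intro i
    have hYS : wsS (Function.update X i (!X i)) = (∑ j : ZMod n, j) - i := by
      rw [wsS]
      have : ∀ j : ZMod n, (if Function.update X i (!X i) j then j else 0)
          = j - (if j = i then i else 0) := by
        intro j
        rw [Function.update_apply]
        by_cases hj : j = i <;> simp [hj, hX]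
      rw [Finset.sum_congr rfl fun j _ => this j, Finset.sum_sub_distrib,
        Finset.sum_ite_eq' Finset.univ i (fun _ => i), if_pos (Finset.mem_univ i)]
    have hXS : wsS X = ∑ j : ZMod n, j := by
      simp [wsS, hX]
    rw [wsF, wsF, hYS, hXS, Function.update_apply]
    have : (∑ j : ZMod n, j) - i ≠ i := by
      intro h
      exact hSne i (sub_eq_iff_eq_add.mp h)
    simp [this, hX]
  rw [wsSens]
  simp only [Finset.card_eq_zero, Finset.filter_eq_empty_iff]
  intro i _
  simp [key i]
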